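/- Let n ≥ 2 be an integer, let α = (α_i)_{i≥1}, β = (β_i)_{i≥1}, γ = (γ_i)_{i≥0} be sequences of positive real numbers with ∑_{i=1}^∞ α_i² < ∞, and let A be a bounded linear operator on ℓ²(V∞) that is the weighted shift associated with (α, β, γ). Then (A*A)^n = (A*)^n A^n holds if and only if the following three conditions hold: (i) γ_{k+n−1}^n = γ_{k+n−1} · γ_{k+n−2} · · · γ_k for all k ≥ 0; (ii) γ_{n−i−1}^n = γ_{n−i−1} · γ_{n−i−2} · · · γ_0 · (∑_{k=1}^∞ α_k² β_k^{2(i−1)})^{1/2} for all i ∈ {1, 2, …, n−1}; and (iii) (∑_{k=1}^∞ α_k²)^{n/2} = (∑_{k=1}^∞ α_k² β_k^{2(n−1)})^{1/2}. -/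

import Mathlib

open ContinuousLinearMap

/-- The vertex set of the rootless directed tree `𝒯∞` with one branching
vertex: `Sum.inl k` encodes the vertex `−k` (for `k ≥ 0`) and `Sum.inr (i, j)`
encodes the vertex `(i+1, j+1)` (for `i, j ≥ 0`). -/
abbrev TreeVertex : Type := ℕ ⊕ ℕ × ℕ

/-- The Hilbert space `ℓ²(V∞)`. -/
abbrev TreeL2 : Type := lp (fun _ : TreeVertex => ℂ) 2

/-- The standard orthonormal basis vector `e_v` of `ℓ²(V∞)`. -/
noncomputable def treeBasis (v : TreeVertex) : TreeL2 := lp.single 2 v 1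

/-- `A` is the weighted shift on `𝒯∞` associated with the sequences of
positive weights `α = (α_{i+1})_{i≥0}`, `β = (β_{i+1})_{i≥0}`,
`γ = (γ_i)_{i≥0}`: `A e_{−(i+1)} = γ_i e_{−i}`,
`A e_0 = ∑_{i≥1} α_i e_{(i,1)}` (the sum converging in `ℓ²(V∞)`), and
`A e_{(i,j)} = β_i e_{(i,j+1)}`. -/
def IsTreeWeightedShift (α β γ : ℕ → ℝ) (A : TreeL2 →L[ℂ] TreeL2) : Prop :=
  (∀ i : ℕ, A (treeBasis (Sum.inl (i + 1))) = (γ i : ℂ) • treeBasis (Sum.inl i)) ∧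
  HasSum (fun i : ℕ => (α i : ℂ) • treeBasis (Sum.inr (i, 0)))
    (A (treeBasis (Sum.inl 0))) ∧
  (∀ i j : ℕ, A (treeBasis (Sum.inr (i, j))) = (β i : ℂ) • treeBasis (Sum.inr (i, j + 1)))

/-!
`A` maps `e_v` into the closed span of the children of `v`, so `A^p e_v` is supported on the
vertices whose `p`-th ancestor is `v`. These sets are disjoint for distinct `v`, hence `A^p`
maps the standard basis to an orthogonal family and `(A^p)* A^p` is diagonal with entries
`‖A^p e_v‖²`. Thus `(A*A)^n = (A*)^n A^n` if and only if `‖A e_v‖^n = ‖A^n e_v‖` for every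
vertex `v`. On the branches this always holds, and at the vertex `−m` it is condition (i),
(ii) or (iii) according as `m ≥ n`, `1 ≤ m < n` or `m = 0`.
-/

open scoped InnerProductSpace

theorem ContinuousLinearMap.pow_apply_of_apply_eq_smul {R M : Type*} [Semiring R]
    [TopologicalSpace M] [AddCommMonoid M] [Module R M] {S : M →L[R] M} {x : M} {c : R}
    (h : S x = c • x) (n : ℕ) : (S ^ n) x = c ^ n • x := by
  induction n with
  | zero => simp
  | succ n ih => rw [pow_succ', mul_apply_eq_comp, ih, map_smul, h, smul_smul, pow_succ]

namespace lp

variable {ι κ 𝕜 : Type*} [RCLike 𝕜] [DecidableEq ι]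

theorem hasSum_single_apply {g : κ → ι} {c : κ → 𝕜} {x : ℓ²(ι, 𝕜)}
    (hx : HasSum (fun k => lp.single 2 (g k) (c k)) x) (u : ι) :
    HasSum (fun k => if u = g k then c k else 0) (x u) := by
  have h : (fun k => if u = g k then c k else 0) =
      fun k => lp.evalCLM 𝕜 (fun _ => 𝕜) 2 u (lp.single 2 (g k) (c k)) :=
    funext fun k => (Pi.single_apply (g k) (c k) u).symm
  rw [h]
  exact hx.mapL _

theorem apply_eq_zero_of_hasSum_single {g : κ → ι} {c : κ → 𝕜} {x : ℓ²(ι, 𝕜)}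
    (hx : HasSum (fun k => lp.single 2 (g k) (c k)) x) {u : ι} (hu : ∀ k, u ≠ g k) :
    x u = 0 :=
  (hasSum_single_apply hx u).unique (by simp [hu])

theorem apply_eq_of_hasSum_single {g : κ → ι} (hg : g.Injective) {c : κ → 𝕜} {x : ℓ²(ι, 𝕜)}
    (hx : HasSum (fun k => lp.single 2 (g k) (c k)) x) (k : κ) :
    x (g k) = c k := by
  classical
  refine (hasSum_single_apply hx (g k)).unique ?_
  convert hasSum_ite_eq k (c k) using 1
  funext k'
  by_cases h : k' = k
  · simp [h]
  · simp [h, hg.eq_iff, Ne.symm h]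

theorem norm_sq_eq_tsum_of_hasSum_single {g : κ → ι} (hg : g.Injective) {c : κ → 𝕜}
    {x : ℓ²(ι, 𝕜)} (hx : HasSum (fun k => lp.single 2 (g k) (c k)) x) :
    ‖x‖ ^ 2 = ∑' k, ‖c k‖ ^ 2 := by
  have h := lp.norm_rpow_eq_tsum (p := 2) (by norm_num) x
  simp only [ENNReal.toReal_ofNat, Real.rpow_two] at h
  rw [h, ← hg.tsum_eq]
  · simp only [apply_eq_of_hasSum_single hg hx]
  · intro u hu
    by_contra hur
    exact hu (by simp [apply_eq_zero_of_hasSum_single hx fun k hk => hur ⟨k, hk.symm⟩])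

omit [DecidableEq ι] in
theorem inner_eq_zero_of_forall_eq_zero_or_eq_zero {x y : ℓ²(ι, 𝕜)}
    (h : ∀ u, x u = 0 ∨ y u = 0) : ⟪x, y⟫_𝕜 = 0 := by
  rw [lp.inner_eq_tsum]
  refine (tsum_congr fun u => ?_).trans tsum_zero
  rcases h u with h | h <;> simp [h]

theorem ext_single {F : Type*} [AddCommMonoid F] [Module 𝕜 F] [TopologicalSpace F] [T2Space F]
    {S T : ℓ²(ι, 𝕜) →L[𝕜] F} (h : ∀ v, S (lp.single 2 v 1) = T (lp.single 2 v 1)) : S = T :=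
  lp.ext_continuousLinearMap (by norm_num) fun v => ContinuousLinearMap.ext_ring (h v)

theorem adjoint_comp_self_single {E : Type*} [NormedAddCommGroup E] [InnerProductSpace 𝕜 E]
    [CompleteSpace E] {T : ℓ²(ι, 𝕜) →L[𝕜] E}
    (hT : Pairwise fun v w => ⟪T (lp.single 2 v 1), T (lp.single 2 w 1)⟫_𝕜 = 0) (v : ι) :
    (adjoint T ∘L T) (lp.single 2 v 1) =
      ((‖T (lp.single 2 v 1)‖ ^ 2 : ℝ) : 𝕜) • lp.single 2 v 1 := by
  ext w
  have hcoord : ∀ z : ℓ²(ι, 𝕜), z w = ⟪lp.single 2 w 1, z⟫_𝕜 := by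
    simp [lp.inner_single_left]
  rw [hcoord, hcoord, comp_apply, adjoint_inner_right, inner_smul_right]
  obtain rfl | hwv := eq_or_ne w v
  · simp [inner_self_eq_norm_sq_to_K]
  · simp [hT hwv, lp.inner_single_left, Pi.single_eq_of_ne hwv]

theorem adjoint_mul_self_pow_eq_iff {T : ℓ²(ι, 𝕜) →L[𝕜] ℓ²(ι, 𝕜)} {n : ℕ}
    (h₁ : Pairwise fun v w => ⟪T (lp.single 2 v 1), T (lp.single 2 w 1)⟫_𝕜 = 0)
    (hₙ : Pairwise fun v w => ⟪(T ^ n) (lp.single 2 v 1), (T ^ n) (lp.single 2 w 1)⟫_𝕜 = 0) :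
    (adjoint T * T) ^ n = adjoint T ^ n * T ^ n ↔
      ∀ v, ‖T (lp.single 2 v 1)‖ ^ n = ‖(T ^ n) (lp.single 2 v 1)‖ := by
  have hpow : adjoint T ^ n * T ^ n = adjoint (T ^ n) ∘L T ^ n := by
    rw [← star_eq_adjoint, ← star_eq_adjoint, star_pow]; rfl
  have hlhs : ∀ v, ((adjoint T * T) ^ n) (lp.single 2 v 1) =
      (((‖T (lp.single 2 v 1)‖ ^ 2) ^ n : ℝ) : 𝕜) • lp.single 2 v 1 := fun v => by
    rw [pow_apply_of_apply_eq_smul (S := adjoint T * T) (adjoint_comp_self_single h₁ v) n]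
    push_cast; rfl
  have hrhs := adjoint_comp_self_single hₙ
  have hsingle : ∀ v : ι, (lp.single 2 v 1 : ℓ²(ι, 𝕜)) ≠ 0 := fun v h => by
    simpa [h] using lp.norm_single (E := fun _ : ι => 𝕜) (p := 2) (by norm_num) v 1
  have hsq : ∀ a b : ℝ, 0 ≤ a → 0 ≤ b → ((a ^ 2) ^ n = b ^ 2 ↔ a ^ n = b) := fun a b ha hb => by
    rw [← pow_mul, mul_comm, pow_mul, pow_left_inj₀ (by positivity) hb two_ne_zero]
  rw [hpow]
  constructor
  · intro h v
    have hv := congrArg (fun S : ℓ²(ι, 𝕜) →L[𝕜] ℓ²(ι, 𝕜) => S (lp.single 2 v 1)) h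
    rw [hlhs, hrhs] at hv
    rw [← hsq _ _ (norm_nonneg _) (norm_nonneg _)]
    exact_mod_cast smul_left_injective 𝕜 (hsingle v) hv
  · intro h
    refine ext_single fun v => ?_
    rw [hlhs, hrhs, (hsq _ _ (norm_nonneg _) (norm_nonneg _)).2 (h v)]

end lp

theorem Nat.forall_iff_forall_add_and_forall_sub {n : ℕ} {P : ℕ → Prop} :
    (∀ m, P m) ↔ (∀ k, P (k + n)) ∧ (∀ i, 1 ≤ i → i ≤ n - 1 → P (n - i)) ∧ P 0 := by
  refine ⟨fun h => ⟨fun k => h _, fun i _ _ => h _, h 0⟩, fun ⟨hge, hlt, h₀⟩ m => ?_⟩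
  rcases le_or_gt n m with hm | hm
  · simpa [Nat.sub_add_cancel hm] using hge (m - n)
  · rcases Nat.eq_zero_or_pos m with rfl | hm₀
    · exact h₀
    · simpa [Nat.sub_sub_self hm.le] using hlt (n - m) (by omega) (by omega)

theorem smul_treeBasis (c : ℂ) (v : TreeVertex) : c • treeBasis v = lp.single 2 v c := by
  rw [treeBasis, ← lp.single_smul, smul_eq_mul, mul_one]

theorem norm_smul_treeBasis (c : ℂ) (v : TreeVertex) : ‖c • treeBasis v‖ = ‖c‖ := by
  rw [smul_treeBasis, lp.norm_single (by norm_num)]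

def treeParent : TreeVertex → TreeVertex
  | Sum.inl m => Sum.inl (m + 1)
  | Sum.inr (_, 0) => Sum.inl 0
  | Sum.inr (i, j + 1) => Sum.inr (i, j)

theorem treeParent_iterate_inl (m k : ℕ) : treeParent^[k] (Sum.inl m) = Sum.inl (m + k) := by
  induction k generalizing m with
  | zero => rfl
  | succ k ih => rw [Function.iterate_succ_apply, treeParent, ih, add_right_comm, add_assoc]

theorem treeParent_iterate_inr (i j p : ℕ) :
    treeParent^[p] (Sum.inr (i, j + p)) = Sum.inr (i, j) := by
  induction p with
  | zero => rfl
  | succ p ih => rw [Function.iterate_succ_apply, ← add_assoc, treeParent, ih]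

theorem treeParent_iterate_inr_eq_inl (i m q : ℕ) :
    treeParent^[m + (q + 1)] (Sum.inr (i, q)) = Sum.inl m := by
  have h := treeParent_iterate_inr i 0 q
  rw [zero_add] at h
  rw [Function.iterate_add_apply, Function.iterate_succ_apply', h, treeParent,
    treeParent_iterate_inl, zero_add]

namespace IsTreeWeightedShift

variable {α β γ : ℕ → ℝ} {A : TreeL2 →L[ℂ] TreeL2}

theorem pow_apply_inr (hA : IsTreeWeightedShift α β γ A) (p i j : ℕ) :
    (A ^ p) (treeBasis (Sum.inr (i, j))) =
      ((β i ^ p : ℝ) : ℂ) • treeBasis (Sum.inr (i, j + p)) := by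
  induction p with
  | zero => simp
  | succ p ih =>
    rw [pow_succ', mul_apply_eq_comp, ih, map_smul, hA.2.2, smul_smul, ← add_assoc, pow_succ]
    push_cast
    ring_nf

theorem pow_apply_inl_add (hA : IsTreeWeightedShift α β γ A) (p k : ℕ) :
    (A ^ p) (treeBasis (Sum.inl (k + p))) =
      ((∏ j ∈ Finset.range p, γ (k + j) : ℝ) : ℂ) • treeBasis (Sum.inl k) := by
  induction p with
  | zero => simp
  | succ p ih =>
    rw [pow_succ, mul_apply_eq_comp, ← add_assoc, hA.1, map_smul, ih, smul_smul,
      Finset.prod_range_succ]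
    push_cast
    ring_nf

theorem apply_single_inr (hA : IsTreeWeightedShift α β γ A) (i j : ℕ) (c : ℂ) :
    A (lp.single 2 (Sum.inr (i, j)) c) = lp.single 2 (Sum.inr (i, j + 1)) (c * β i) := by
  rw [← smul_treeBasis, map_smul, hA.2.2, smul_smul, smul_treeBasis]

theorem hasSum_pow_apply_inl (hA : IsTreeWeightedShift α β γ A) (m q : ℕ) :
    HasSum (fun i => lp.single 2 (Sum.inr (i, q))
        (((∏ j ∈ Finset.range m, γ j) * α i * β i ^ q : ℝ) : ℂ))
      ((A ^ (m + (q + 1))) (treeBasis (Sum.inl m))) := by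
  induction q with
  | zero =>
    have h := hA.2.1.const_smul ((∏ j ∈ Finset.range m, γ j : ℝ) : ℂ)
    have h₀ := pow_apply_inl_add hA m 0
    simp only [zero_add] at h₀
    rw [zero_add, pow_succ', mul_apply_eq_comp, h₀, map_smul]
    refine h.congr_fun fun i => ?_
    rw [smul_smul, smul_treeBasis]
    push_cast
    ring_nf
  | succ q ih =>
    rw [show m + (q + 1 + 1) = m + (q + 1) + 1 by ring, pow_succ', mul_apply_eq_comp]
    refine (ih.mapL A).congr_fun fun i => ?_
    rw [apply_single_inr hA]
    push_cast
    ring_nf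

theorem pow_apply_treeBasis_apply_eq_zero (hA : IsTreeWeightedShift α β γ A) {p : ℕ}
    {v u : TreeVertex} (hu : treeParent^[p] u ≠ v) : (A ^ p) (treeBasis v) u = 0 := by
  rcases v with m | ⟨i, j⟩
  · rcases le_or_gt p m with hpm | hmp
    · obtain ⟨k, rfl⟩ : ∃ k, m = k + p := ⟨m - p, by omega⟩
      rw [pow_apply_inl_add hA, smul_treeBasis, lp.single_apply_ne]
      rintro rfl
      exact hu (treeParent_iterate_inl k p)
    · obtain ⟨q, rfl⟩ : ∃ q, p = m + (q + 1) := ⟨p - m - 1, by omega⟩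
      refine lp.apply_eq_zero_of_hasSum_single (hasSum_pow_apply_inl hA m q) ?_
      rintro i rfl
      exact hu (treeParent_iterate_inr_eq_inl i m q)
  · rw [pow_apply_inr hA, smul_treeBasis, lp.single_apply_ne]
    rintro rfl
    exact hu (treeParent_iterate_inr i j p)

theorem pairwise_inner_pow_apply_treeBasis (hA : IsTreeWeightedShift α β γ A) (p : ℕ) :
    Pairwise fun v w => ⟪(A ^ p) (treeBasis v), (A ^ p) (treeBasis w)⟫_ℂ = 0 :=
  fun v w hvw => lp.inner_eq_zero_of_forall_eq_zero_or_eq_zero fun u => by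
    by_cases hu : treeParent^[p] u = v
    · exact .inr (pow_apply_treeBasis_apply_eq_zero hA (hu ▸ hvw))
    · exact .inl (pow_apply_treeBasis_apply_eq_zero hA hu)

theorem norm_pow_apply_inr (hA : IsTreeWeightedShift α β γ A) (p i j : ℕ) :
    ‖(A ^ p) (treeBasis (Sum.inr (i, j)))‖ = |β i| ^ p := by
  rw [pow_apply_inr hA, norm_smul_treeBasis, Complex.norm_real, Real.norm_eq_abs, abs_pow]

theorem norm_pow_apply_inl_of_le (hA : IsTreeWeightedShift α β γ A) {p m : ℕ} (h : p ≤ m) :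
    ‖(A ^ p) (treeBasis (Sum.inl m))‖ = ∏ j ∈ Finset.range p, |γ (m - p + j)| := by
  obtain ⟨k, rfl⟩ : ∃ k, m = k + p := ⟨m - p, by omega⟩
  rw [pow_apply_inl_add hA, norm_smul_treeBasis, Complex.norm_real, Real.norm_eq_abs,
    Finset.abs_prod, Nat.add_sub_cancel]

theorem norm_pow_apply_inl_of_lt (hA : IsTreeWeightedShift α β γ A) {p m : ℕ} (h : m < p) :
    ‖(A ^ p) (treeBasis (Sum.inl m))‖ =
      (∏ j ∈ Finset.range m, |γ j|) * √(∑' i, α i ^ 2 * β i ^ (2 * (p - m - 1))) := by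
  obtain ⟨q, rfl⟩ : ∃ q, p = m + (q + 1) := ⟨p - m - 1, by omega⟩
  have hinj : Function.Injective fun i : ℕ => (Sum.inr (i, q) : TreeVertex) :=
    fun i i' h => by simpa using h
  have hsq := lp.norm_sq_eq_tsum_of_hasSum_single hinj (hasSum_pow_apply_inl hA m q)
  have hterm : ∀ i, ‖(((∏ j ∈ Finset.range m, γ j) * α i * β i ^ q : ℝ) : ℂ)‖ ^ 2 =
      (∏ j ∈ Finset.range m, |γ j|) ^ 2 * (α i ^ 2 * β i ^ (2 * q)) := fun i => by
    rw [Complex.norm_real, Real.norm_eq_abs, sq_abs, ← Finset.abs_prod, sq_abs, pow_mul]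
    ring
  rw [← Real.sqrt_sq (norm_nonneg _), hsq, tsum_congr hterm, tsum_mul_left,
    Real.sqrt_mul (by positivity), Real.sqrt_sq (by positivity),
    show m + (q + 1) - m - 1 = q by omega]

theorem adjoint_mul_self_pow_eq_iff (hA : IsTreeWeightedShift α β γ A) (n : ℕ) :
    (adjoint A * A) ^ n = adjoint A ^ n * A ^ n ↔
      ∀ v, ‖A (treeBasis v)‖ ^ n = ‖(A ^ n) (treeBasis v)‖ :=
  lp.adjoint_mul_self_pow_eq_iff (pow_one A ▸ hA.pairwise_inner_pow_apply_treeBasis 1)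
    (hA.pairwise_inner_pow_apply_treeBasis n)

theorem forall_norm_pow_eq_iff (hA : IsTreeWeightedShift α β γ A) {n : ℕ} (hn : 1 ≤ n) :
    (∀ v, ‖A (treeBasis v)‖ ^ n = ‖(A ^ n) (treeBasis v)‖) ↔
      ((∀ k : ℕ, |γ (k + n - 1)| ^ n = ∏ j ∈ Finset.range n, |γ (k + j)|) ∧
       (∀ i : ℕ, 1 ≤ i → i ≤ n - 1 →
          |γ (n - i - 1)| ^ n = (∏ j ∈ Finset.range (n - i), |γ j|) *
            √(∑' m : ℕ, α m ^ 2 * β m ^ (2 * (i - 1)))) ∧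
       √(∑' m : ℕ, α m ^ 2) ^ n = √(∑' m : ℕ, α m ^ 2 * β m ^ (2 * (n - 1)))) := by
  have hA₁ : ∀ {m}, 1 ≤ m → ‖A (treeBasis (Sum.inl m))‖ = |γ (m - 1)| := fun hm => by
    simpa using hA.norm_pow_apply_inl_of_le hm
  have hinr : ∀ ij : ℕ × ℕ,
      ‖A (treeBasis (Sum.inr ij))‖ ^ n = ‖(A ^ n) (treeBasis (Sum.inr ij))‖ := fun ⟨i, j⟩ => by
    have h₁ := hA.norm_pow_apply_inr 1 i j
    rw [pow_one, pow_one] at h₁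
    rw [h₁, hA.norm_pow_apply_inr]
  rw [Sum.forall, and_iff_left hinr, Nat.forall_iff_forall_add_and_forall_sub]
  refine and_congr (forall_congr' fun k => ?_) (and_congr (forall₃_congr fun i hi hin => ?_) ?_)
  · rw [hA₁ (by omega), hA.norm_pow_apply_inl_of_le le_add_self, Nat.add_sub_cancel]
  · rw [hA₁ (by omega), hA.norm_pow_apply_inl_of_lt (by omega),
      show n - (n - i) - 1 = i - 1 by omega]
  · simpa using iff_of_eq (congrArg₂ (fun a b => a ^ n = b)
      (hA.norm_pow_apply_inl_of_lt zero_lt_one) (hA.norm_pow_apply_inl_of_lt hn))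

end IsTreeWeightedShift

theorem treeShift_power_equality_iff (n : ℕ) (hn : 2 ≤ n) (α β γ : ℕ → ℝ)
    (hγ : ∀ i, 0 < γ i)
    (A : TreeL2 →L[ℂ] TreeL2) (hA : IsTreeWeightedShift α β γ A) :
    (adjoint A * A) ^ n = (adjoint A) ^ n * A ^ n ↔
      ((∀ k : ℕ, γ (k + n - 1) ^ n = ∏ j ∈ Finset.range n, γ (k + j)) ∧
       (∀ i : ℕ, 1 ≤ i → i ≤ n - 1 →
          γ (n - i - 1) ^ n = (∏ j ∈ Finset.range (n - i), γ j) *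
            Real.sqrt (∑' m : ℕ, (α m) ^ 2 * (β m) ^ (2 * (i - 1)))) ∧
       Real.sqrt (∑' m : ℕ, (α m) ^ 2) ^ n
         = Real.sqrt (∑' m : ℕ, (α m) ^ 2 * (β m) ^ (2 * (n - 1)))) := by
  have hγ_abs : ∀ i, |γ i| = γ i := fun i => abs_of_pos (hγ i)
  rw [hA.adjoint_mul_self_pow_eq_iff, hA.forall_norm_pow_eq_iff (by omega)]
  simp only [hγ_abs]
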